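/- arXiv:math/0610714 — 7 statements merged into one kernel-verified Lean document; each statement's English description precedes it below -/
import Mathlib

section
/- Let B₁ and B₂ be abstract crystals for a quantum generalized Kac-Moody algebra. Define on the set B₁ ⊗ B₂ = {b₁ ⊗ b₂} the maps: wt(b⊗b′) = wt(b) + wt(b′); ε_i(b⊗b′) = max(ε_i(b), ε_i(b′) − wt_i(b)); φ_i(b⊗b′) = max(φ_i(b) + wt_i(b′), φ_i(b′)); f̃_i(b⊗b′) = f̃_i b ⊗ b′ if φ_i(b) > ε_i(b′) and b ⊗ f̃_i b′ otherwise; for i real, ẽ_i(b⊗b′) = ẽ_i b ⊗ b′ if φ_i(b) ≥ ε_i(b′) and b ⊗ ẽ_i b′ otherwise; for i imaginary, ẽ_i(b⊗b′) = ẽ_i b ⊗ b′ if φ_i(b) > ε_i(b′) − a_{ii}, = 0 if ε_i(b′) < φ_i(b) ≤ ε_i(b′) − a_{ii}, and = b ⊗ ẽ_i b′ if φ_i(b) ≤ ε_i(b′). Then B₁ ⊗ B₂ with these maps is an abstract crystal. -/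
/-- A Borcherds-Cartan datum: an even integral Borcherds-Cartan matrix together with
a weight lattice `P`, simple coroots (given by the pairing `h`) and simple roots `α`. -/
structure BorcherdsCartanDatum (I : Type*) (P : Type*) [AddCommGroup P] where
  a : I → I → ℤ
  h : I → P →+ ℤ
  α : I → P
  pairing : ∀ i j, h i (α j) = a i j
  diag : ∀ i, a i i = 2 ∨ a i i ≤ 0
  offdiag : ∀ i j, i ≠ j → a i j ≤ 0
  symm_zero : ∀ i j, a i j = 0 ↔ a j i = 0

/-- The raw data of an abstract crystal: weight map, Kashiwara operators
(`none` plays the role of `0`), and the maps `ε_i, φ_i` with values in `ℤ ⊔ {-∞}`. -/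
structure CrystalData (I : Type*) (P : Type*) (B : Type*) where
  wt : B → P
  e : I → B → Option B
  f : I → B → Option B
  eps : I → B → WithBot ℤ
  phi : I → B → WithBot ℤ

/-- The axioms of an abstract crystal for a quantum generalized Kac-Moody algebra
(Definition 2.1 of the paper). -/
structure IsCrystal {I P : Type*} [AddCommGroup P] (D : BorcherdsCartanDatum I P)
    {B : Type*} (C : CrystalData I P B) : Prop where
  wt_e : ∀ i b b', C.e i b = some b' → C.wt b' = C.wt b + D.α i
  wt_f : ∀ i b b', C.f i b = some b' → C.wt b' = C.wt b - D.α i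
  phi_eps : ∀ i b, C.phi i b = C.eps i b + (D.h i (C.wt b) : WithBot ℤ)
  f_iff_e : ∀ i b b', C.f i b = some b' ↔ C.e i b' = some b
  e_re : ∀ i b b', D.a i i = 2 → C.e i b = some b' →
    C.eps i b = C.eps i b' + 1 ∧ C.phi i b' = C.phi i b + 1
  e_im : ∀ i b b', D.a i i ≤ 0 → C.e i b = some b' →
    C.eps i b' = C.eps i b ∧ C.phi i b' = C.phi i b + (D.a i i : WithBot ℤ)
  f_re : ∀ i b b', D.a i i = 2 → C.f i b = some b' →
    C.eps i b' = C.eps i b + 1 ∧ C.phi i b = C.phi i b' + 1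
  f_im : ∀ i b b', D.a i i ≤ 0 → C.f i b = some b' →
    C.eps i b' = C.eps i b ∧ C.phi i b = C.phi i b' + (D.a i i : WithBot ℤ)
  bot_dead : ∀ i b, C.phi i b = ⊥ → C.e i b = none ∧ C.f i b = none

variable {I P : Type*} [AddCommGroup P]

/-- The tensor product rule for abstract crystals. -/
noncomputable def CrystalData.tensor (D : BorcherdsCartanDatum I P) {B₁ B₂ : Type*}
    (C₁ : CrystalData I P B₁) (C₂ : CrystalData I P B₂) : CrystalData I P (B₁ × B₂) where
  wt p := C₁.wt p.1 + C₂.wt p.2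
  eps i p := max (C₁.eps i p.1) (C₂.eps i p.2 + ((-(D.h i (C₁.wt p.1)) : ℤ) : WithBot ℤ))
  phi i p := max (C₁.phi i p.1 + ((D.h i (C₂.wt p.2) : ℤ) : WithBot ℤ)) (C₂.phi i p.2)
  f i p :=
    if C₂.eps i p.2 < C₁.phi i p.1 then (C₁.f i p.1).map (fun x => (x, p.2))
    else (C₂.f i p.2).map (fun x => (p.1, x))
  e i p :=
    if D.a i i = 2 then
      (if C₂.eps i p.2 ≤ C₁.phi i p.1 then (C₁.e i p.1).map (fun x => (x, p.2))
       else (C₂.e i p.2).map (fun x => (p.1, x)))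
    else
      (if C₂.eps i p.2 + ((-(D.a i i) : ℤ) : WithBot ℤ) < C₁.phi i p.1 then
         (C₁.e i p.1).map (fun x => (x, p.2))
       else if C₁.phi i p.1 ≤ C₂.eps i p.2 then (C₂.e i p.2).map (fun x => (p.1, x))
       else none)

/-- An isomorphism of crystals: a bijection preserving `wt, ε_i, φ_i` and
commuting with all Kashiwara operators. -/
def IsCrystalIso {B B' : Type*} (C : CrystalData I P B) (C' : CrystalData I P B')
    (ψ : B → B') : Prop :=
  Function.Bijective ψ ∧ (∀ b, C'.wt (ψ b) = C.wt b) ∧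
  (∀ i b, C'.eps i (ψ b) = C.eps i b) ∧ (∀ i b, C'.phi i (ψ b) = C.phi i b) ∧
  (∀ i b, C'.e i (ψ b) = (C.e i b).map ψ) ∧ (∀ i b, C'.f i (ψ b) = (C.f i b).map ψ)

/-- The crystal `T_λ`. -/
def Tcrys (I : Type*) (lam : P) : CrystalData I P Unit where
  wt _ := lam
  e _ _ := none
  f _ _ := none
  eps _ _ := ⊥
  phi _ _ := ⊥

/-- The crystal `C = {c}`. -/
def Ccrys (I : Type*) : CrystalData I P Unit where
  wt _ := 0
  e _ _ := none
  f _ _ := none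
  eps _ _ := 0
  phi _ _ := 0

/-- The elementary crystal `B_i`, with `n` standing for `b_i(-n)`. -/
def elemCrys [DecidableEq I] (D : BorcherdsCartanDatum I P) (i : I) : CrystalData I P ℕ where
  wt n := (-(n : ℤ)) • D.α i
  e j n := if j = i then (if n = 0 then none else some (n - 1)) else none
  f j n := if j = i then some (n + 1) else none
  eps j n := if j = i then (if D.a i i = 2 then ((n : ℤ) : WithBot ℤ) else 0) else ⊥
  phi j n := if j = i then
      (if D.a i i = 2 then ((-(n : ℤ) : ℤ) : WithBot ℤ)
       else ((-(n : ℤ) * D.a i i : ℤ) : WithBot ℤ)) else ⊥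

/-- Carrier of the finite truncation `B_{i_{N-1}} ⊗ ⋯ ⊗ B_{i_0}` of the
semi-infinite crystal `B(𝐢)`. -/
def TruncCarrier : ℕ → Type
  | 0 => Unit
  | N + 1 => ℕ × TruncCarrier N

/-- The finite truncation `B_{i_{N-1}} ⊗ ⋯ ⊗ B_{i_0}` (with a trivial `T_0` at the
right end) of the semi-infinite crystal `B(𝐢)`. -/
noncomputable def truncCrys [DecidableEq I] (D : BorcherdsCartanDatum I P) (ι : ℕ → I) :
    (N : ℕ) → CrystalData I P (TruncCarrier N)
  | 0 => Tcrys I (0 : P)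
  | N + 1 => CrystalData.tensor D (elemCrys D (ι N)) (truncCrys D ι N)

/-- Truncation of a finitely supported sequence `x` (representing
`⋯ ⊗ b_{i_k}(-x_k) ⊗ ⋯ ⊗ b_{i_0}(-x_0)`) to the first `N` tensor factors. -/
def truncEmbed (x : ℕ → ℕ) : (N : ℕ) → TruncCarrier N
  | 0 => ()
  | N + 1 => ((x N, truncEmbed x N) : ℕ × TruncCarrier N)


section WBHelpers
variable {x y z : WithBot ℤ} {k : ℤ}

private lemma wb_lt_add_iff : x < y + (k : WithBot ℤ) ↔ x + ((-k : ℤ) : WithBot ℤ) < y := by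
  induction x using WithBot.recBotCoe <;> induction y using WithBot.recBotCoe <;>
    simp_all [← WithBot.coe_one, ← WithBot.coe_add] <;> omega

private lemma wb_le_of_lt_add_one (h : x < y + (1 : WithBot ℤ)) : x ≤ y := by
  induction x using WithBot.recBotCoe <;> induction y using WithBot.recBotCoe <;>
    simp_all [← WithBot.coe_one, ← WithBot.coe_add]

private lemma wb_not_add_one_le (hx : x ≠ ⊥) (h : z ≤ x) : ¬ (x + (1 : WithBot ℤ) ≤ z) := by
  induction x using WithBot.recBotCoe <;> induction z using WithBot.recBotCoe <;>
    simp_all [← WithBot.coe_one, ← WithBot.coe_add]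

private lemma wb_lt_add_one (hy : y ≠ ⊥) (h : x ≤ y) : x < y + (1 : WithBot ℤ) := by
  induction x using WithBot.recBotCoe <;> induction y using WithBot.recBotCoe <;>
    simp_all [← WithBot.coe_one, ← WithBot.coe_add]

private lemma wb_not_lt_of_lt_add_one (h : x < y + (1 : WithBot ℤ)) : ¬ (y < x) := by
  induction x using WithBot.recBotCoe <;> induction y using WithBot.recBotCoe <;>
    simp_all [← WithBot.coe_one, ← WithBot.coe_add]

private lemma wb_im_not_lt (hk : k ≤ 0) (h : x ≤ y) : ¬ (y + ((-k : ℤ) : WithBot ℤ) < x) := by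
  induction x using WithBot.recBotCoe <;> induction y using WithBot.recBotCoe <;>
    simp_all [← WithBot.coe_one, ← WithBot.coe_add]; omega
end WBHelpers

/-- the tensor product of two abstract crystals is an abstract crystal. -/

theorem tensor_isCrystal {I P : Type*} [AddCommGroup P]
    (D : BorcherdsCartanDatum I P) {B₁ B₂ : Type*}
    (C₁ : CrystalData I P B₁) (C₂ : CrystalData I P B₂)
    (h₁ : IsCrystal D C₁) (h₂ : IsCrystal D C₂) :
    IsCrystal D (CrystalData.tensor D C₁ C₂) := by
  constructor
  case wt_e =>
    rintro i ⟨b₁, b₂⟩ p' h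
    simp only [CrystalData.tensor] at h ⊢
    split_ifs at h
    all_goals first
      | (rw [Option.map_eq_some_iff] at h
         obtain ⟨x, hx, rfl⟩ := h
         dsimp only
         first
           | (rw [h₁.wt_e i b₁ x hx]; abel)
           | (rw [h₂.wt_e i b₂ x hx]; abel))
      | simp at h
  case wt_f =>
    rintro i ⟨b₁, b₂⟩ p' h
    simp only [CrystalData.tensor] at h ⊢
    split_ifs at h
    all_goals first
      | (rw [Option.map_eq_some_iff] at h
         obtain ⟨x, hx, rfl⟩ := h
         dsimp only
         first
           | (rw [h₁.wt_f i b₁ x hx]; abel)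
           | (rw [h₂.wt_f i b₂ x hx]; abel))
      | simp at h
  case phi_eps =>
    rintro i ⟨b₁, b₂⟩
    simp only [CrystalData.tensor, map_add]
    rw [h₁.phi_eps i b₁, h₂.phi_eps i b₂]
    generalize hA : C₁.eps i b₁ = A
    generalize hA' : C₂.eps i b₂ = A'
    induction A using WithBot.recBotCoe <;> induction A' using WithBot.recBotCoe <;>
      simp_all [← WithBot.coe_one, ← WithBot.coe_add] <;>
      (try (simp only [max_def]; split_ifs)) <;> (try (norm_cast at *)) <;> (try omega)
  case f_iff_e =>
    rintro i ⟨b₁, b₂⟩ ⟨b₁', b₂'⟩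
    simp only [CrystalData.tensor]
    constructor
    · intro h
      by_cases hc : C₂.eps i b₂ < C₁.phi i b₁
      · rw [if_pos hc, Option.map_eq_some_iff] at h
        obtain ⟨x, hx, hxe⟩ := h
        rw [Prod.mk.injEq] at hxe
        obtain ⟨rfl, rfl⟩ := hxe
        have he : C₁.e i x = some b₁ := (h₁.f_iff_e i b₁ x).mp hx
        rcases D.diag i with hre | him
        · have hcond : C₂.eps i b₂ ≤ C₁.phi i x := by
            rw [(h₁.f_re i b₁ x hre hx).2] at hc
            exact wb_le_of_lt_add_one hc
          rw [if_pos hre, if_pos hcond, he]; simp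
        · have hne : ¬ D.a i i = 2 := by omega
          have hcond : C₂.eps i b₂ + ((-(D.a i i) : ℤ) : WithBot ℤ) < C₁.phi i x := by
            rw [(h₁.f_im i b₁ x him hx).2] at hc
            exact wb_lt_add_iff.mp hc
          rw [if_neg hne, if_pos hcond, he]; simp
      · rw [if_neg hc, Option.map_eq_some_iff] at h
        obtain ⟨y, hy, hye⟩ := h
        rw [Prod.mk.injEq] at hye
        obtain ⟨rfl, rfl⟩ := hye
        have he : C₂.e i y = some b₂ := (h₂.f_iff_e i b₂ y).mp hy
        have hc' : C₁.phi i b₁ ≤ C₂.eps i b₂ := not_lt.mp hc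
        have hnb : C₂.phi i b₂ ≠ ⊥ := fun hb => by
          simp [(h₂.bot_dead i b₂ hb).2] at hy
        have hne' : C₂.eps i b₂ ≠ ⊥ := by
          intro hb
          rw [h₂.phi_eps i b₂, hb] at hnb
          simp at hnb
        rcases D.diag i with hre | him
        · have hcond : ¬ (C₂.eps i y ≤ C₁.phi i b₁) := by
            rw [(h₂.f_re i b₂ y hre hy).1]
            exact wb_not_add_one_le hne' hc'
          rw [if_pos hre, if_neg hcond, he]; simp
        · have hne : ¬ D.a i i = 2 := by omega
          have hc1 : ¬ (C₂.eps i y + ((-(D.a i i) : ℤ) : WithBot ℤ) < C₁.phi i b₁) := by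
            rw [(h₂.f_im i b₂ y him hy).1]
            exact wb_im_not_lt him hc'
          have hc2 : C₁.phi i b₁ ≤ C₂.eps i y := by
            rw [(h₂.f_im i b₂ y him hy).1]; exact hc'
          rw [if_neg hne, if_neg hc1, if_pos hc2, he]; simp
    · intro h
      rcases D.diag i with hre | him
      · rw [if_pos hre] at h
        by_cases hc : C₂.eps i b₂' ≤ C₁.phi i b₁'
        · rw [if_pos hc, Option.map_eq_some_iff] at h
          obtain ⟨x, hx, hxe⟩ := h
          rw [Prod.mk.injEq] at hxe
          obtain ⟨rfl, rfl⟩ := hxe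
          have hf : C₁.f i x = some b₁' := (h₁.f_iff_e i x b₁').mpr hx
          have hnb : C₁.phi i b₁' ≠ ⊥ := fun hb => by
            simp [(h₁.bot_dead i b₁' hb).1] at hx
          have hcond : C₂.eps i b₂' < C₁.phi i x := by
            rw [(h₁.e_re i b₁' x hre hx).2]
            exact wb_lt_add_one hnb hc
          rw [if_pos hcond, hf]; simp
        · rw [if_neg hc, Option.map_eq_some_iff] at h
          obtain ⟨y, hy, hye⟩ := h
          rw [Prod.mk.injEq] at hye
          obtain ⟨rfl, rfl⟩ := hye
          have hf : C₂.f i y = some b₂' := (h₂.f_iff_e i y b₂').mpr hy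
          have hcond : ¬ (C₂.eps i y < C₁.phi i b₁') := by
            have hc'' : C₁.phi i b₁' < C₂.eps i b₂' := not_le.mp hc
            rw [(h₂.e_re i b₂' y hre hy).1] at hc''
            exact wb_not_lt_of_lt_add_one hc''
          rw [if_neg hcond, hf]; simp
      · have hne : ¬ D.a i i = 2 := by omega
        rw [if_neg hne] at h
        split_ifs at h with hc1 hc2
        · rw [Option.map_eq_some_iff] at h
          obtain ⟨x, hx, hxe⟩ := h
          rw [Prod.mk.injEq] at hxe
          obtain ⟨rfl, rfl⟩ := hxe
          have hf : C₁.f i x = some b₁' := (h₁.f_iff_e i x b₁').mpr hx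
          have hcond : C₂.eps i b₂' < C₁.phi i x := by
            rw [(h₁.e_im i b₁' x him hx).2]
            exact wb_lt_add_iff.mpr hc1
          rw [if_pos hcond, hf]; simp
        · rw [Option.map_eq_some_iff] at h
          obtain ⟨y, hy, hye⟩ := h
          rw [Prod.mk.injEq] at hye
          obtain ⟨rfl, rfl⟩ := hye
          have hf : C₂.f i y = some b₂' := (h₂.f_iff_e i y b₂').mpr hy
          have hcond : ¬ (C₂.eps i y < C₁.phi i b₁') := by
            rw [(h₂.e_im i b₂' y him hy).1]
            exact not_lt.mpr hc2
          rw [if_neg hcond, hf]; simp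
        all_goals simp at h
  case e_re =>
    rintro i ⟨b₁, b₂⟩ p' hre h
    simp only [CrystalData.tensor] at h ⊢
    rw [if_pos hre] at h
    by_cases hc : C₂.eps i b₂ ≤ C₁.phi i b₁
    · rw [if_pos hc, Option.map_eq_some_iff] at h
      obtain ⟨x, hx, rfl⟩ := h
      dsimp only
      have hE := (h₁.e_re i b₁ x hre hx).1
      have hw : C₁.wt x = C₁.wt b₁ + D.α i := h₁.wt_e i b₁ x hx
      simp only [h₁.phi_eps, h₂.phi_eps, hE, hw, map_add, D.pairing, hre] at hc ⊢
      generalize hA : C₁.eps i x = A at *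
      generalize hA' : C₂.eps i b₂ = A' at *
      induction A using WithBot.recBotCoe <;> induction A' using WithBot.recBotCoe <;>
        simp_all [← WithBot.coe_one, ← WithBot.coe_add] <;>
        (try (simp only [max_def]; split_ifs)) <;> (try (norm_cast at *)) <;> (try omega)
    · rw [if_neg hc, Option.map_eq_some_iff] at h
      obtain ⟨y, hy, rfl⟩ := h
      dsimp only
      have hE := (h₂.e_re i b₂ y hre hy).1
      have hw : C₂.wt y = C₂.wt b₂ + D.α i := h₂.wt_e i b₂ y hy
      have hc' : C₁.phi i b₁ < C₂.eps i b₂ := not_le.mp hc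
      simp only [h₁.phi_eps, h₂.phi_eps, hE, hw, map_add, D.pairing, hre] at hc' ⊢
      generalize hA : C₁.eps i b₁ = A at *
      generalize hA' : C₂.eps i y = A' at *
      induction A using WithBot.recBotCoe <;> induction A' using WithBot.recBotCoe <;>
        simp_all [← WithBot.coe_one, ← WithBot.coe_add] <;>
        (try (simp only [max_def]; split_ifs)) <;> (try (norm_cast at *)) <;> (try omega)
  case e_im =>
    rintro i ⟨b₁, b₂⟩ p' him h
    have hne : ¬ D.a i i = 2 := by omega
    simp only [CrystalData.tensor] at h ⊢
    rw [if_neg hne] at h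
    split_ifs at h with hc1 hc2
    · rw [Option.map_eq_some_iff] at h
      obtain ⟨x, hx, rfl⟩ := h
      dsimp only
      have hE := (h₁.e_im i b₁ x him hx).1
      have hw : C₁.wt x = C₁.wt b₁ + D.α i := h₁.wt_e i b₁ x hx
      simp only [h₁.phi_eps, h₂.phi_eps, hE, hw, map_add, D.pairing] at hc1 ⊢
      generalize hA : C₁.eps i b₁ = A at *
      generalize hA' : C₂.eps i b₂ = A' at *
      induction A using WithBot.recBotCoe <;> induction A' using WithBot.recBotCoe <;>
        simp_all [← WithBot.coe_one, ← WithBot.coe_add] <;>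
        (try (simp only [max_def]; split_ifs)) <;> (try (norm_cast at *)) <;> (try omega)
    · rw [Option.map_eq_some_iff] at h
      obtain ⟨y, hy, rfl⟩ := h
      dsimp only
      have hE := (h₂.e_im i b₂ y him hy).1
      have hw : C₂.wt y = C₂.wt b₂ + D.α i := h₂.wt_e i b₂ y hy
      simp only [h₁.phi_eps, h₂.phi_eps, hE, hw, map_add, D.pairing] at hc2 ⊢
      generalize hA : C₁.eps i b₁ = A at *
      generalize hA' : C₂.eps i b₂ = A' at *
      induction A using WithBot.recBotCoe <;> induction A' using WithBot.recBotCoe <;>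
        simp_all [← WithBot.coe_one, ← WithBot.coe_add] <;>
        (try (simp only [max_def]; split_ifs)) <;> (try (norm_cast at *)) <;> (try omega)
    all_goals simp at h
  case f_re =>
    rintro i ⟨b₁, b₂⟩ p' hre h
    simp only [CrystalData.tensor] at h ⊢
    by_cases hc : C₂.eps i b₂ < C₁.phi i b₁
    · rw [if_pos hc, Option.map_eq_some_iff] at h
      obtain ⟨x, hx, rfl⟩ := h
      dsimp only
      have hE := (h₁.f_re i b₁ x hre hx).1
      have hw : C₁.wt x = C₁.wt b₁ - D.α i := h₁.wt_f i b₁ x hx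
      simp only [h₁.phi_eps, h₂.phi_eps, hE, hw, map_sub, D.pairing, hre] at hc ⊢
      generalize hA : C₁.eps i b₁ = A at *
      generalize hA' : C₂.eps i b₂ = A' at *
      induction A using WithBot.recBotCoe <;> induction A' using WithBot.recBotCoe <;>
        simp_all [← WithBot.coe_one, ← WithBot.coe_add] <;>
        (try (simp only [max_def]; split_ifs)) <;> (try (norm_cast at *)) <;> (try omega)
    · rw [if_neg hc, Option.map_eq_some_iff] at h
      obtain ⟨y, hy, rfl⟩ := h
      dsimp only
      have hE := (h₂.f_re i b₂ y hre hy).1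
      have hw : C₂.wt y = C₂.wt b₂ - D.α i := h₂.wt_f i b₂ y hy
      have hc' : C₁.phi i b₁ ≤ C₂.eps i b₂ := not_lt.mp hc
      simp only [h₁.phi_eps, h₂.phi_eps, hE, hw, map_sub, D.pairing, hre] at hc' ⊢
      generalize hA : C₁.eps i b₁ = A at *
      generalize hA' : C₂.eps i b₂ = A' at *
      induction A using WithBot.recBotCoe <;> induction A' using WithBot.recBotCoe <;>
        simp_all [← WithBot.coe_one, ← WithBot.coe_add] <;>
        (try (simp only [max_def]; split_ifs)) <;> (try (norm_cast at *)) <;> (try omega)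
  case f_im =>
    rintro i ⟨b₁, b₂⟩ p' him h
    simp only [CrystalData.tensor] at h ⊢
    by_cases hc : C₂.eps i b₂ < C₁.phi i b₁
    · rw [if_pos hc, Option.map_eq_some_iff] at h
      obtain ⟨x, hx, rfl⟩ := h
      dsimp only
      have hE := (h₁.f_im i b₁ x him hx).1
      have hw : C₁.wt x = C₁.wt b₁ - D.α i := h₁.wt_f i b₁ x hx
      simp only [h₁.phi_eps, h₂.phi_eps, hE, hw, map_sub, D.pairing] at hc ⊢
      generalize hA : C₁.eps i b₁ = A at *
      generalize hA' : C₂.eps i b₂ = A' at *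
      induction A using WithBot.recBotCoe <;> induction A' using WithBot.recBotCoe <;>
        simp_all [← WithBot.coe_one, ← WithBot.coe_add] <;>
        (try (simp only [max_def]; split_ifs)) <;> (try (norm_cast at *)) <;> (try omega)
    · rw [if_neg hc, Option.map_eq_some_iff] at h
      obtain ⟨y, hy, rfl⟩ := h
      dsimp only
      have hE := (h₂.f_im i b₂ y him hy).1
      have hw : C₂.wt y = C₂.wt b₂ - D.α i := h₂.wt_f i b₂ y hy
      have hc' : C₁.phi i b₁ ≤ C₂.eps i b₂ := not_lt.mp hc
      simp only [h₁.phi_eps, h₂.phi_eps, hE, hw, map_sub, D.pairing] at hc' ⊢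
      generalize hA : C₁.eps i b₁ = A at *
      generalize hA' : C₂.eps i b₂ = A' at *
      induction A using WithBot.recBotCoe <;> induction A' using WithBot.recBotCoe <;>
        simp_all [← WithBot.coe_one, ← WithBot.coe_add] <;>
        (try (simp only [max_def]; split_ifs)) <;> (try (norm_cast at *)) <;> (try omega)
  case bot_dead =>
    rintro i ⟨b₁, b₂⟩ h
    simp only [CrystalData.tensor] at h ⊢
    rw [max_eq_bot] at h
    obtain ⟨ha, hb⟩ := h
    have h1 : C₁.phi i b₁ = ⊥ := by
      rcases WithBot.add_eq_bot.mp ha with h' | h'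
      · exact h'
      · exact absurd h' (WithBot.coe_ne_bot)
    obtain ⟨he1, hf1⟩ := h₁.bot_dead i b₁ h1
    obtain ⟨he2, hf2⟩ := h₂.bot_dead i b₂ hb
    constructor
    · split_ifs <;> simp [he1, he2]
    · split_ifs <;> simp [hf1, hf2]
end

section
/- For an imaginary index i (a_{ii} ≤ 0) and elements b ∈ B₁, b′ ∈ B₂ of abstract crystals with φ_i(b) > ε_i(b′), one has ẽ_i(f̃_i(b ⊗ b′)) = b ⊗ b′ and ε_i(f̃_i(b ⊗ b′)) = ε_i(b ⊗ b′), provided f̃_i b ≠ 0. -/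
variable {I P : Type*} [AddCommGroup P]

/-- for an imaginary index `i` with `φ_i(b) > ε_i(b')` and `f̃_i b ≠ 0`,
one has `ẽ_i (f̃_i (b ⊗ b')) = b ⊗ b'` and `ε_i(f̃_i(b ⊗ b')) = ε_i(b ⊗ b')`. -/
theorem tensor_ef_imaginary {I P : Type*} [AddCommGroup P]
    (D : BorcherdsCartanDatum I P) {B₁ B₂ : Type*}
    (C₁ : CrystalData I P B₁) (C₂ : CrystalData I P B₂)
    (h₁ : IsCrystal D C₁) (h₂ : IsCrystal D C₂)
    (i : I) (him : D.a i i ≤ 0) (b : B₁) (b' : B₂)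
    (hgt : C₂.eps i b' < C₁.phi i b)
    (b₁ : B₁) (hf : C₁.f i b = some b₁) :
    (CrystalData.tensor D C₁ C₂).f i (b, b') = some (b₁, b') ∧
    (CrystalData.tensor D C₁ C₂).e i (b₁, b') = some (b, b') ∧
    (CrystalData.tensor D C₁ C₂).eps i (b₁, b') =
      (CrystalData.tensor D C₁ C₂).eps i (b, b') := by
  obtain ⟨heps1, hphi1⟩ := h₁.f_im i b b₁ him hf
  have hwt : C₁.wt b₁ = C₁.wt b - D.α i := h₁.wt_f i b b₁ hf
  have hne2 : D.a i i ≠ 2 := by omega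
  have hphib_ne : C₁.phi i b ≠ ⊥ := fun h => by simp [h] at hgt
  have hphib1_ne : C₁.phi i b₁ ≠ ⊥ := by
    intro h; rw [h] at hphi1; simp at hphi1; exact hphib_ne hphi1
  obtain ⟨q, hq⟩ := WithBot.ne_bot_iff_exists.mp hphib1_ne
  have hF : (CrystalData.tensor D C₁ C₂).f i (b, b') = some (b₁, b') := by
    simp [CrystalData.tensor, hgt, hf]
  refine ⟨hF, ?_, ?_⟩
  · have hcond : C₂.eps i b' + ((-(D.a i i) : ℤ) : WithBot ℤ) < C₁.phi i b₁ := by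
      rw [← hq]
      rw [hphi1, ← hq] at hgt
      cases heb' : C₂.eps i b' with
      | bot => simp
      | coe r =>
        rw [heb'] at hgt
        rw [show ((q:WithBot ℤ) + (D.a i i : WithBot ℤ)) = ((q + D.a i i : ℤ) : WithBot ℤ) by
          exact_mod_cast rfl] at hgt
        have hlt : r < q + D.a i i := by exact_mod_cast hgt
        rw [show ((r:WithBot ℤ) + ((-(D.a i i) : ℤ) : WithBot ℤ)) = ((r + -(D.a i i) : ℤ) : WithBot ℤ) by
          exact_mod_cast rfl]
        exact_mod_cast (by omega : r + -(D.a i i) < q)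
    have he : C₁.e i b₁ = some b := (h₁.f_iff_e i b b₁).mp hf
    simp [CrystalData.tensor, hne2, hcond, he]
  · have hepsb_ne : C₁.eps i b ≠ ⊥ := by
      intro h
      have h2 := h₁.phi_eps i b
      rw [h] at h2; simp at h2; exact hphib_ne h2
    obtain ⟨p, hp⟩ := WithBot.ne_bot_iff_exists.mp hepsb_ne
    have hpe := h₁.phi_eps i b
    have key : C₂.eps i b' + ((-(D.h i (C₁.wt b)) : ℤ) : WithBot ℤ) < C₁.eps i b := by
      rw [hpe, ← hp] at hgt
      rw [← hp]
      cases heb' : C₂.eps i b' with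
      | bot => simp
      | coe r =>
        rw [heb'] at hgt
        rw [show ((p:WithBot ℤ) + ((D.h i (C₁.wt b) : ℤ) : WithBot ℤ)) = ((p + D.h i (C₁.wt b) : ℤ) : WithBot ℤ) by exact_mod_cast rfl] at hgt
        have hlt : r < p + D.h i (C₁.wt b) := by exact_mod_cast hgt
        rw [show ((r:WithBot ℤ) + ((-(D.h i (C₁.wt b)) : ℤ) : WithBot ℤ)) = ((r + -(D.h i (C₁.wt b)) : ℤ) : WithBot ℤ) by exact_mod_cast rfl]
        exact_mod_cast (by omega : r + -(D.h i (C₁.wt b)) < p)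
    have key1 : C₂.eps i b' + ((-(D.h i (C₁.wt b₁)) : ℤ) : WithBot ℤ) < C₁.eps i b := by
      rw [hwt]
      have hh : D.h i (C₁.wt b - D.α i) = D.h i (C₁.wt b) - D.a i i := by
        rw [map_sub, D.pairing]
      rw [hh, ← hp]
      cases heb' : C₂.eps i b' with
      | bot => simp
      | coe r =>
        rw [heb', hpe, ← hp] at hgt
        rw [show ((p:WithBot ℤ) + ((D.h i (C₁.wt b) : ℤ) : WithBot ℤ)) = ((p + D.h i (C₁.wt b) : ℤ) : WithBot ℤ) by exact_mod_cast rfl] at hgt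
        have hlt : r < p + D.h i (C₁.wt b) := by exact_mod_cast hgt
        rw [show ((r:WithBot ℤ) + ((-(D.h i (C₁.wt b) - D.a i i) : ℤ) : WithBot ℤ)) = ((r + -(D.h i (C₁.wt b) - D.a i i) : ℤ) : WithBot ℤ) by exact_mod_cast rfl]
        exact_mod_cast (by omega : r + -(D.h i (C₁.wt b) - D.a i i) < p)
    simp only [CrystalData.tensor, heps1]
    rw [max_eq_left key1.le, max_eq_left key.le]
end

section
/- For three abstract crystals B₁, B₂, B₃ of a quantum generalized Kac-Moody algebra, the map (b₁ ⊗ b₂) ⊗ b₃ ↦ b₁ ⊗ (b₂ ⊗ b₃) is an isomorphism of crystals (B₁ ⊗ B₂) ⊗ B₃ ≅ B₁ ⊗ (B₂ ⊗ B₃); in particular it commutes with all ẽ_i and f̃_i, including for imaginary indices i. -/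
variable {I P : Type*} [AddCommGroup P]

section WB
variable {p q r : WithBot ℤ} {h c : ℤ}

lemma wb_max_add (a b : WithBot ℤ) (t : ℤ) :
    max a b + (t : WithBot ℤ) = max (a + t) (b + t) := by
  induction a using WithBot.recBotCoe with
  | bot => simp
  | coe a =>
    induction b using WithBot.recBotCoe with
    | bot => simp
    | coe b =>
      rw [← WithBot.coe_add, ← WithBot.coe_add, ← WithBot.coe_max, ← WithBot.coe_max,
        ← WithBot.coe_add]
      norm_num [max_add_add_right]

lemma wb_add_neg_lt : r + ((-h : ℤ) : WithBot ℤ) < p ↔ r < p + (h : WithBot ℤ) := by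
  induction r using WithBot.recBotCoe with
  | bot => simp [WithBot.bot_lt_iff_ne_bot]
  | coe r =>
    induction p using WithBot.recBotCoe with
    | bot => simp [← WithBot.coe_add]
    | coe p => rw [← WithBot.coe_add, ← WithBot.coe_add, WithBot.coe_lt_coe, WithBot.coe_lt_coe]; omega

lemma wb_add_neg_le : r + ((-h : ℤ) : WithBot ℤ) ≤ p ↔ r ≤ p + (h : WithBot ℤ) := by
  induction r using WithBot.recBotCoe with
  | bot => simp
  | coe r =>
    induction p using WithBot.recBotCoe with
    | bot => simp [← WithBot.coe_add]
    | coe p => rw [← WithBot.coe_add, ← WithBot.coe_add, WithBot.coe_le_coe, WithBot.coe_le_coe]; omega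

lemma wb_le_add (hc : 0 ≤ c) : q ≤ q + (c : WithBot ℤ) := by
  induction q using WithBot.recBotCoe with
  | bot => simp
  | coe q => rw [← WithBot.coe_add, WithBot.coe_le_coe]; omega

lemma wb_add_le_add (hpq : p ≤ q) : p + (h : WithBot ℤ) ≤ q + (h : WithBot ℤ) :=
  add_le_add_left hpq _

end WB


section SEL
variable {α : Type*}

lemma f_sel (p q r : WithBot ℤ) (h : ℤ) (x₁ x₂ x₃ : Option α) :
    (if max q (r + ((-h : ℤ) : WithBot ℤ)) < p then x₁
     else if r < q + (h : WithBot ℤ) then x₂ else x₃)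
    = (if r < max (p + (h : WithBot ℤ)) (q + (h : WithBot ℤ)) then
         (if q < p then x₁ else x₂) else x₃) := by
  induction p using WithBot.recBotCoe <;> induction q using WithBot.recBotCoe <;>
    induction r using WithBot.recBotCoe <;>
    simp only [← WithBot.coe_add, ← WithBot.coe_max, WithBot.bot_add, WithBot.add_bot,
      max_bot_left, max_bot_right, WithBot.coe_lt_coe, WithBot.coe_le_coe, WithBot.bot_lt_coe,
      bot_le, le_bot_iff, WithBot.coe_ne_bot, not_lt_bot, lt_irrefl, le_refl, if_true, if_false,
      lt_self_iff_false] <;>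
  · split_ifs <;> first | rfl | omega

lemma e_re_sel (p q r : WithBot ℤ) (h : ℤ) (x₁ x₂ x₃ : Option α) :
    (if max q (r + ((-h : ℤ) : WithBot ℤ)) ≤ p then x₁
     else if r ≤ q + (h : WithBot ℤ) then x₂ else x₃)
    = (if r ≤ max (p + (h : WithBot ℤ)) (q + (h : WithBot ℤ)) then
         (if q ≤ p then x₁ else x₂) else x₃) := by
  induction p using WithBot.recBotCoe <;> induction q using WithBot.recBotCoe <;>
    induction r using WithBot.recBotCoe <;>
    simp only [← WithBot.coe_add, ← WithBot.coe_max, WithBot.bot_add, WithBot.add_bot,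
      max_bot_left, max_bot_right, WithBot.coe_lt_coe, WithBot.coe_le_coe, WithBot.bot_lt_coe,
      bot_le, le_bot_iff, WithBot.coe_ne_bot, not_lt_bot, lt_irrefl, le_refl, if_true, if_false,
      lt_self_iff_false] <;>
  · split_ifs <;> first | rfl | omega

lemma e_im_sel (p q r : WithBot ℤ) (h c : ℤ) (hc : 0 ≤ c) (x₁ x₂ x₃ : Option α) :
    (if max q (r + ((-h : ℤ) : WithBot ℤ)) + (c : WithBot ℤ) < p then x₁
     else if p ≤ max q (r + ((-h : ℤ) : WithBot ℤ)) then
       (if r + (c : WithBot ℤ) < q + (h : WithBot ℤ) then x₂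
        else if q + (h : WithBot ℤ) ≤ r then x₃ else none)
     else none)
    = (if r + (c : WithBot ℤ) < max (p + (h : WithBot ℤ)) (q + (h : WithBot ℤ)) then
         (if q + (c : WithBot ℤ) < p then x₁ else if p ≤ q then x₂ else none)
       else if max (p + (h : WithBot ℤ)) (q + (h : WithBot ℤ)) ≤ r then x₃ else none) := by
  induction p using WithBot.recBotCoe <;> induction q using WithBot.recBotCoe <;>
    induction r using WithBot.recBotCoe <;>
    simp only [← WithBot.coe_add, ← WithBot.coe_max, WithBot.bot_add, WithBot.add_bot,
      max_bot_left, max_bot_right, WithBot.coe_lt_coe, WithBot.coe_le_coe, WithBot.bot_lt_coe,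
      bot_le, le_bot_iff, WithBot.coe_ne_bot, not_lt_bot, lt_irrefl, le_refl, if_true, if_false,
      lt_self_iff_false, WithBot.coe_le_coe] <;>
  · split_ifs <;> first | rfl | omega

end SEL

lemma eps_assoc_wb (a b c : WithBot ℤ) (s t : ℤ) :
    max a (max b (c + ((-t : ℤ) : WithBot ℤ)) + ((-s : ℤ) : WithBot ℤ))
      = max (max a (b + ((-s : ℤ) : WithBot ℤ))) (c + ((-(s + t) : ℤ) : WithBot ℤ)) := by
  rw [wb_max_add, max_assoc]
  congr 2
  rw [add_assoc, ← WithBot.coe_add]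
  congr 2
  omega

lemma phi_assoc_wb (a b c : WithBot ℤ) (s t : ℤ) :
    max (a + ((s + t : ℤ) : WithBot ℤ)) (max (b + (t : WithBot ℤ)) c)
      = max (max (a + (s : WithBot ℤ)) b + (t : WithBot ℤ)) c := by
  rw [wb_max_add, ← max_assoc]
  congr 2
  rw [add_assoc, ← WithBot.coe_add]

/-- associativity of the tensor product of abstract crystals:
`(b₁ ⊗ b₂) ⊗ b₃ ↦ b₁ ⊗ (b₂ ⊗ b₃)` is an isomorphism of crystals, commuting with
all `ẽ_i` and `f̃_i` (including imaginary indices). -/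
theorem tensor_assoc {I P : Type*} [AddCommGroup P]
    (D : BorcherdsCartanDatum I P) {B₁ B₂ B₃ : Type*}
    (C₁ : CrystalData I P B₁) (C₂ : CrystalData I P B₂) (C₃ : CrystalData I P B₃)
    (h₁ : IsCrystal D C₁) (h₂ : IsCrystal D C₂) (h₃ : IsCrystal D C₃) :
    IsCrystalIso (CrystalData.tensor D (CrystalData.tensor D C₁ C₂) C₃)
      (CrystalData.tensor D C₁ (CrystalData.tensor D C₂ C₃))
      (fun p => (p.1.1, (p.1.2, p.2))) := by
  refine ⟨⟨fun a b hab => ?_, fun ⟨x, y, z⟩ => ⟨((x, y), z), rfl⟩⟩, ?_, ?_, ?_, ?_, ?_⟩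
  · obtain ⟨⟨a1, a2⟩, a3⟩ := a; obtain ⟨⟨b1, b2⟩, b3⟩ := b
    simpa [Prod.ext_iff, and_assoc] using hab
  · rintro ⟨⟨b1, b2⟩, b3⟩
    simp [CrystalData.tensor, add_assoc]
  · rintro i ⟨⟨b1, b2⟩, b3⟩
    simp only [CrystalData.tensor, map_add]
    exact eps_assoc_wb _ _ _ _ _
  · rintro i ⟨⟨b1, b2⟩, b3⟩
    simp only [CrystalData.tensor, map_add]
    exact phi_assoc_wb _ _ _ _ _
  · rintro i ⟨⟨b1, b2⟩, b3⟩
    by_cases ha : D.a i i = 2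
    · simp only [CrystalData.tensor, ha, if_true, h₂.phi_eps i b2, apply_ite (Option.map _),
        Option.map_map, Option.map_none, Function.comp_def]
      exact (e_re_sel (C₁.phi i b1) (C₂.eps i b2) (C₃.eps i b3) (D.h i (C₂.wt b2)) _ _ _)
    · simp only [CrystalData.tensor, ha, if_false, h₂.phi_eps i b2, apply_ite (Option.map _),
        Option.map_map, Option.map_none, Function.comp_def]
      exact (e_im_sel (C₁.phi i b1) (C₂.eps i b2) (C₃.eps i b3) (D.h i (C₂.wt b2)) (-(D.a i i)) (by have := (D.diag i).resolve_left ha; omega) _ _ _)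
  · rintro i ⟨⟨b1, b2⟩, b3⟩
    simp only [CrystalData.tensor, h₂.phi_eps i b2, apply_ite (Option.map _),
      Option.map_map, Option.map_none, Function.comp_def]
    exact (f_sel (C₁.phi i b1) (C₂.eps i b2) (C₃.eps i b3) (D.h i (C₂.wt b2)) _ _ _)
end

section
/- Associativity of tensor product for imaginary indices, Case 1 subcase: let i be imaginary and b₁, b₂, b₃ elements of crystals with φ_i(b₁ ⊗ b₂) > ε_i(b₃) − a_{ii} and φ_i(b₁) > ε_i(b₂) − a_{ii}. Then φ_i(b₁) > ε_i(b₂ ⊗ b₃) − a_{ii}, hence ẽ_i((b₁⊗b₂)⊗b₃) = (ẽ_i b₁ ⊗ b₂) ⊗ b₃ corresponds to ẽ_i(b₁⊗(b₂⊗b₃)) = ẽ_i b₁ ⊗ (b₂ ⊗ b₃). -/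
variable {I P : Type*} [AddCommGroup P]

/-- associativity, Case 1 subcase for imaginary `i`: if
`φ_i(b₁ ⊗ b₂) > ε_i(b₃) - a_{ii}` and `φ_i(b₁) > ε_i(b₂) - a_{ii}`, then
`φ_i(b₁) > ε_i(b₂ ⊗ b₃) - a_{ii}`, so `ẽ_i` acts on the first factor on both sides. -/
theorem tensor_assoc_case1 {I P : Type*} [AddCommGroup P]
    (D : BorcherdsCartanDatum I P) {B₁ B₂ B₃ : Type*}
    (C₁ : CrystalData I P B₁) (C₂ : CrystalData I P B₂) (C₃ : CrystalData I P B₃)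
    (h₁ : IsCrystal D C₁) (h₂ : IsCrystal D C₂) (h₃ : IsCrystal D C₃)
    (i : I) (him : D.a i i ≤ 0) (b₁ : B₁) (b₂ : B₂) (b₃ : B₃)
    (hc1 : C₃.eps i b₃ + ((-(D.a i i) : ℤ) : WithBot ℤ) <
      (CrystalData.tensor D C₁ C₂).phi i (b₁, b₂))
    (hc2 : C₂.eps i b₂ + ((-(D.a i i) : ℤ) : WithBot ℤ) < C₁.phi i b₁) :
    (CrystalData.tensor D C₂ C₃).eps i (b₂, b₃) + ((-(D.a i i) : ℤ) : WithBot ℤ) <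
      C₁.phi i b₁ ∧
    (CrystalData.tensor D (CrystalData.tensor D C₁ C₂) C₃).e i ((b₁, b₂), b₃) =
      (C₁.e i b₁).map (fun y => ((y, b₂), b₃)) ∧
    (CrystalData.tensor D C₁ (CrystalData.tensor D C₂ C₃)).e i (b₁, (b₂, b₃)) =
      (C₁.e i b₁).map (fun y => (y, (b₂, b₃))) := by
  classical
  have ha2 : D.a i i ≠ 2 := by omega
  set a : ℤ := D.a i i with ha
  set h2 : ℤ := D.h i (C₂.wt b₂) with hh2
  -- ε₂(b₂) < φ₁(b₁)
  have heps2 : C₂.eps i b₂ < C₁.phi i b₁ := by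
    refine lt_of_le_of_lt ?_ hc2
    calc C₂.eps i b₂ = C₂.eps i b₂ + 0 := by rw [add_zero]
    _ ≤ C₂.eps i b₂ + ((-a : ℤ) : WithBot ℤ) := by
        refine add_le_add_right ?_ _
        exact_mod_cast (by omega : (0:ℤ) ≤ -a)
  -- φ₂(b₂) ≤ φ₁(b₁) + h₂
  have hphi2 : C₂.phi i b₂ ≤ C₁.phi i b₁ + (h2 : WithBot ℤ) := by
    rw [h₂.phi_eps i b₂, ← hh2]
    exact add_le_add_left heps2.le _
  have hc1' : C₃.eps i b₃ + ((-a : ℤ) : WithBot ℤ) < C₁.phi i b₁ + (h2 : WithBot ℤ) := by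
    have := hc1
    simp only [CrystalData.tensor, ← hh2, ← ha] at this
    rwa [max_eq_left hphi2] at this
  have hc1'' : C₃.eps i b₃ + ((-h2 : ℤ) : WithBot ℤ) + ((-a : ℤ) : WithBot ℤ) <
      C₁.phi i b₁ := by
    have h3 := WithBot.add_lt_add_right (z := ((-h2 : ℤ) : WithBot ℤ)) (by simp) hc1'
    have : C₁.phi i b₁ + (h2 : WithBot ℤ) + ((-h2 : ℤ) : WithBot ℤ) = C₁.phi i b₁ := by
      rw [add_assoc, ← WithBot.coe_add]
      simp
    rw [this] at h3
    calc C₃.eps i b₃ + ((-h2 : ℤ) : WithBot ℤ) + ((-a : ℤ) : WithBot ℤ)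
        = C₃.eps i b₃ + ((-a : ℤ) : WithBot ℤ) + ((-h2 : ℤ) : WithBot ℤ) := add_right_comm _ _ _
    _ < C₁.phi i b₁ := h3
  have hkey : (CrystalData.tensor D C₂ C₃).eps i (b₂, b₃) + ((-a : ℤ) : WithBot ℤ) <
      C₁.phi i b₁ := by
    simp only [CrystalData.tensor, ← hh2]
    rw [← max_add_add_right]
    exact max_lt hc2 hc1''
  refine ⟨hkey, ?_, ?_⟩
  · show (if a = 2 then _ else _) = _
    rw [if_neg ha2, if_pos hc1]
    show ((if a = 2 then _ else _ : Option (B₁ × B₂)).map _) = _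
    rw [if_neg ha2, if_pos hc2, Option.map_map]
    rfl
  · show (if a = 2 then _ else _) = _
    rw [if_neg ha2, if_pos hkey]
end

section
/- Associativity of tensor product for imaginary indices, Case 2: let i be imaginary and suppose ε_i(b₃) < φ_i(b₁ ⊗ b₂) ≤ ε_i(b₃) − a_{ii}. Then ẽ_i(b₁ ⊗ (b₂ ⊗ b₃)) = 0 (matching ẽ_i((b₁⊗b₂)⊗b₃) = 0). -/
variable {I P : Type*} [AddCommGroup P]

/-- associativity, Case 2 for imaginary `i`: if
`ε_i(b₃) < φ_i(b₁ ⊗ b₂) ≤ ε_i(b₃) - a_{ii}`, then `ẽ_i(b₁ ⊗ (b₂ ⊗ b₃)) = 0`,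
matching `ẽ_i((b₁ ⊗ b₂) ⊗ b₃) = 0`. -/
theorem tensor_assoc_case2 {I P : Type*} [AddCommGroup P]
    (D : BorcherdsCartanDatum I P) {B₁ B₂ B₃ : Type*}
    (C₁ : CrystalData I P B₁) (C₂ : CrystalData I P B₂) (C₃ : CrystalData I P B₃)
    (h₁ : IsCrystal D C₁) (h₂ : IsCrystal D C₂) (h₃ : IsCrystal D C₃)
    (i : I) (him : D.a i i ≤ 0) (b₁ : B₁) (b₂ : B₂) (b₃ : B₃)
    (hlt : C₃.eps i b₃ < (CrystalData.tensor D C₁ C₂).phi i (b₁, b₂))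
    (hle : (CrystalData.tensor D C₁ C₂).phi i (b₁, b₂) ≤
      C₃.eps i b₃ + ((-(D.a i i) : ℤ) : WithBot ℤ)) :
    (CrystalData.tensor D C₁ (CrystalData.tensor D C₂ C₃)).e i (b₁, (b₂, b₃)) = none ∧
    (CrystalData.tensor D (CrystalData.tensor D C₁ C₂) C₃).e i ((b₁, b₂), b₃) = none := by
  have ha2 : D.a i i ≠ 2 := by omega
  have key : ∀ (x : WithBot ℤ) (c d : ℤ), x + (c : WithBot ℤ) + (d : WithBot ℤ)
      = x + ((c + d : ℤ) : WithBot ℤ) := by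
    intro x c d; rw [add_assoc, ← WithBot.coe_add]
  simp only [CrystalData.tensor] at hlt hle ⊢
  set φ₁ := C₁.phi i b₁ with hdφ₁
  set ε₂ := C₂.eps i b₂ with hdε₂
  set φ₂ := C₂.phi i b₂ with hdφ₂
  set ε₃ := C₃.eps i b₃ with hdε₃
  set w₂ : ℤ := D.h i (C₂.wt b₂) with hw₂
  set A : ℤ := -(D.a i i) with hA
  have hpe : φ₂ = ε₂ + (w₂ : WithBot ℤ) := h₂.phi_eps i b₂
  have hc1 : ¬ (ε₂ ⊔ (ε₃ + ((-w₂ : ℤ) : WithBot ℤ)) + ((A : ℤ) : WithBot ℤ) < φ₁) := by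
    intro h1
    have step1 : ε₃ + ((-w₂ : ℤ) : WithBot ℤ) + (A : WithBot ℤ) < φ₁ :=
      lt_of_le_of_lt (add_le_add (le_max_right _ _) le_rfl) h1
    have step2 : ε₃ + ((-w₂ : ℤ) : WithBot ℤ) + (A : WithBot ℤ) + (w₂ : WithBot ℤ)
        < φ₁ + (w₂ : WithBot ℤ) :=
      (WithBot.add_lt_add_iff_right (by simp)).mpr step1
    rw [key, key] at step2
    have hAw : -w₂ + (A + w₂) = A := by ring
    rw [hAw] at step2
    exact absurd (le_trans (le_max_left _ _) hle) (not_le.mpr step2)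
  have hinner : ¬ (ε₃ + ((A : ℤ) : WithBot ℤ) < φ₂) :=
    not_lt.mpr (le_trans (le_max_right _ _) hle)
  refine ⟨?_, ?_⟩
  · rw [if_neg ha2, if_neg hc1]
    by_cases hc2 : φ₁ ≤ ε₂ ⊔ (ε₃ + ((-w₂ : ℤ) : WithBot ℤ))
    · have heps3 : ε₃ < φ₂ := by
        rcases le_max_iff.1 hc2 with h | h
        · have h12 : φ₁ + (w₂ : WithBot ℤ) ≤ φ₂ := by
            rw [hpe]; exact add_le_add h le_rfl
          rcases lt_max_iff.1 hlt with h' | h'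
          · exact lt_of_lt_of_le h' h12
          · exact h'
        · have h12 : φ₁ + (w₂ : WithBot ℤ) ≤ ε₃ := by
            calc φ₁ + (w₂ : WithBot ℤ) ≤ ε₃ + ((-w₂ : ℤ) : WithBot ℤ) + (w₂ : WithBot ℤ) :=
                  add_le_add h le_rfl
            _ = ε₃ + ((-w₂ + w₂ : ℤ) : WithBot ℤ) := key _ _ _
            _ = ε₃ := by norm_num
          rcases lt_max_iff.1 hlt with h' | h'
          · exact absurd (lt_of_lt_of_le h' h12) (lt_irrefl _)
          · exact h'
      rw [if_pos hc2, if_neg ha2, if_neg hinner, if_neg (not_le.mpr heps3)]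
      rfl
    · rw [if_neg hc2]
  · rw [if_neg ha2, if_neg (not_lt.mpr hle)]; exact if_neg (not_le.mpr hlt)
end

section
/- Associativity of tensor product for imaginary indices, Case 3: let i be imaginary and suppose φ_i(b₁ ⊗ b₂) ≤ ε_i(b₃). Then φ_i(b₂) ≤ ε_i(b₃) and φ_i(b₁) ≤ ε_i(b₂ ⊗ b₃), so that ẽ_i on both (b₁⊗b₂)⊗b₃ and b₁⊗(b₂⊗b₃) acts on the third factor b₃. -/
variable {I P : Type*} [AddCommGroup P]

private lemma wb_shift {a b : WithBot ℤ} {c : ℤ} (h : a + (c : WithBot ℤ) ≤ b) :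
    a ≤ b + ((-c : ℤ) : WithBot ℤ) := by
  induction a using WithBot.recBotCoe with
  | bot => exact bot_le
  | coe x =>
    induction b using WithBot.recBotCoe with
    | bot => simp [← WithBot.coe_add] at h
    | coe y =>
      rw [← WithBot.coe_add] at h ⊢
      rw [WithBot.coe_le_coe] at h ⊢
      omega

private lemma wb_le_add_s7 {a : WithBot ℤ} {n : ℤ} (hn : 0 ≤ n) : a ≤ a + (n : WithBot ℤ) := by
  induction a using WithBot.recBotCoe with
  | bot => exact bot_le
  | coe x => rw [← WithBot.coe_add, WithBot.coe_le_coe]; omega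

/-- associativity, Case 3 for imaginary `i`: if
`φ_i(b₁ ⊗ b₂) ≤ ε_i(b₃)`, then `φ_i(b₂) ≤ ε_i(b₃)` and `φ_i(b₁) ≤ ε_i(b₂ ⊗ b₃)`,
so that `ẽ_i` acts on the third factor on both sides. -/
theorem tensor_assoc_case3 {I P : Type*} [AddCommGroup P]
    (D : BorcherdsCartanDatum I P) {B₁ B₂ B₃ : Type*}
    (C₁ : CrystalData I P B₁) (C₂ : CrystalData I P B₂) (C₃ : CrystalData I P B₃)
    (h₁ : IsCrystal D C₁) (h₂ : IsCrystal D C₂) (h₃ : IsCrystal D C₃)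
    (i : I) (him : D.a i i ≤ 0) (b₁ : B₁) (b₂ : B₂) (b₃ : B₃)
    (hle : (CrystalData.tensor D C₁ C₂).phi i (b₁, b₂) ≤ C₃.eps i b₃) :
    C₂.phi i b₂ ≤ C₃.eps i b₃ ∧
    C₁.phi i b₁ ≤ (CrystalData.tensor D C₂ C₃).eps i (b₂, b₃) ∧
    (CrystalData.tensor D (CrystalData.tensor D C₁ C₂) C₃).e i ((b₁, b₂), b₃) =
      (C₃.e i b₃).map (fun y => ((b₁, b₂), y)) ∧
    (CrystalData.tensor D C₁ (CrystalData.tensor D C₂ C₃)).e i (b₁, (b₂, b₃)) =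
      (C₃.e i b₃).map (fun y => (b₁, (b₂, y))) := by
  have hne : D.a i i ≠ 2 := by omega
  have hnn : (0:ℤ) ≤ -(D.a i i) := by omega
  have hle' := hle
  simp only [CrystalData.tensor, max_le_iff] at hle'
  obtain ⟨hA, hB⟩ := hle'
  have hphi1 : C₁.phi i b₁ ≤ (CrystalData.tensor D C₂ C₃).eps i (b₂, b₃) :=
    (wb_shift hA).trans (le_max_right _ _)
  refine ⟨hB, hphi1, ?_, ?_⟩
  · show (if D.a i i = 2 then _ else _) = _
    rw [if_neg hne, if_neg (not_lt.2 (hle.trans (wb_le_add_s7 hnn))),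
      if_pos hle]
  · have h23 : C₂.phi i b₂ ≤ (C₃.eps i b₃ : WithBot ℤ) := hB
    show (if D.a i i = 2 then _ else _) = _
    rw [if_neg hne, if_neg (not_lt.2 (hphi1.trans (wb_le_add_s7 hnn))),
      if_pos hphi1]
    show (((if D.a i i = 2 then _ else _) : Option (B₂ × B₃)).map _) = _
    rw [if_neg hne, if_neg (not_lt.2 (h23.trans (wb_le_add_s7 hnn))), if_pos h23,
      Option.map_map]
    rfl
end

section
/- In the semi-infinite crystal B(i), for an imaginary index i and b = ⋯ ⊗ b_{i_k}(−x_k) ⊗ ⋯ ⊗ b_{i_1}(−x_1), one has ε_i(b) = 0 and φ_i(b) = wt_i(b) = ⟨h_i, −Σ_k x_k α_{i_k}⟩. Moreover f̃_i b = ⋯ ⊗ b_{i_{n_f}}(−x_{n_f}−1) ⊗ ⋯ ⊗ b_{i_1}(−x_1), where n_f is the smallest k with i_k = i and Σ_{l>k} ⟨h_i, α_{i_l}⟩ x_l = 0. -/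
variable {I P : Type*} [AddCommGroup P]

section Aux

variable {I P : Type*} [AddCommGroup P] [DecidableEq I]
variable (D : BorcherdsCartanDatum I P) (ι : ℕ → I) (x : ℕ → ℕ) (i : I)

/-- The `k`-th coefficient `⟨h_i, α_{i_k}⟩ x_k`. -/
def cfun (k : ℕ) : ℤ := D.a i (ι k) * (x k : ℤ)

lemma cfun_nonpos (him : D.a i i ≤ 0) (k : ℕ) : cfun D ι x i k ≤ 0 := by
  unfold cfun
  rcases eq_or_ne i (ι k) with h | h
  · exact mul_nonpos_of_nonpos_of_nonneg (h ▸ him) (by positivity)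
  · exact mul_nonpos_of_nonpos_of_nonneg (D.offdiag i (ι k) h) (by positivity)

lemma aii_ne_two (him : D.a i i ≤ 0) : D.a i i ≠ 2 := by omega

lemma h_wt (N : ℕ) :
    D.h i ((truncCrys D ι N).wt (truncEmbed x N)) =
      -∑ k ∈ Finset.range N, cfun D ι x i k := by
  induction N with
  | zero => show D.h i (0 : P) = _; rw [map_zero, Finset.range_zero, Finset.sum_empty, neg_zero]
  | succ N ih =>
    show D.h i ((elemCrys D (ι N)).wt (x N) + (truncCrys D ι N).wt (truncEmbed x N)) = _
    rw [map_add, ih]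
    simp only [elemCrys, map_zsmul, smul_eq_mul, D.pairing, Finset.sum_range_succ, cfun]
    ring

lemma elem_eps (him : D.a i i ≤ 0) (N n : ℕ) :
    (elemCrys D (ι N)).eps i n = if i = ι N then (0 : WithBot ℤ) else ⊥ := by
  rcases eq_or_ne i (ι N) with h | h
  · simp only [elemCrys, if_pos h]
    rw [if_neg (by rw [← h]; exact aii_ne_two D i him)]
  · simp [elemCrys, h]

lemma elem_phi (him : D.a i i ≤ 0) (N n : ℕ) :
    (elemCrys D (ι N)).phi i n =
      if i = ι N then ((-(n : ℤ) * D.a i i : ℤ) : WithBot ℤ) else ⊥ := by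
  rcases eq_or_ne i (ι N) with h | h
  · simp only [elemCrys, if_pos h, ← h, if_neg (aii_ne_two D i him)]
  · simp [elemCrys, h]

lemma eps_succ (N : ℕ) :
    (truncCrys D ι (N + 1)).eps i (truncEmbed x (N + 1)) =
      max ((elemCrys D (ι N)).eps i (x N))
        ((truncCrys D ι N).eps i (truncEmbed x N) + ((cfun D ι x i N : ℤ) : WithBot ℤ)) := by
  have hh : -(D.h i ((elemCrys D (ι N)).wt (x N))) = cfun D ι x i N := by
    show -(D.h i ((-(x N : ℤ)) • D.α (ι N))) = _
    rw [map_zsmul, smul_eq_mul, D.pairing, cfun]; ring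
  have h0 : (truncCrys D ι (N + 1)).eps i (truncEmbed x (N + 1)) =
      max ((elemCrys D (ι N)).eps i (x N))
        ((truncCrys D ι N).eps i (truncEmbed x N)
          + ((-(D.h i ((elemCrys D (ι N)).wt (x N))) : ℤ) : WithBot ℤ)) := rfl
  rw [h0, hh]

lemma phi_succ (N : ℕ) :
    (truncCrys D ι (N + 1)).phi i (truncEmbed x (N + 1)) =
      max ((elemCrys D (ι N)).phi i (x N)
          + ((-∑ k ∈ Finset.range N, cfun D ι x i k : ℤ) : WithBot ℤ))
        ((truncCrys D ι N).phi i (truncEmbed x N)) := by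
  have h0 : (truncCrys D ι (N + 1)).phi i (truncEmbed x (N + 1)) =
      max ((elemCrys D (ι N)).phi i (x N)
          + ((D.h i ((truncCrys D ι N).wt (truncEmbed x N)) : ℤ) : WithBot ℤ))
        ((truncCrys D ι N).phi i (truncEmbed x N)) := rfl
  rw [h0, h_wt]

lemma f_succ (N : ℕ) :
    (truncCrys D ι (N + 1)).f i (truncEmbed x (N + 1)) =
      if (truncCrys D ι N).eps i (truncEmbed x N) < (elemCrys D (ι N)).phi i (x N) then
        ((elemCrys D (ι N)).f i (x N)).map (fun n => (n, truncEmbed x N))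
      else ((truncCrys D ι N).f i (truncEmbed x N)).map (fun b => (x N, b)) := rfl

lemma eps_nonpos (him : D.a i i ≤ 0) (N : ℕ) :
    (truncCrys D ι N).eps i (truncEmbed x N) ≤ 0 := by
  induction N with
  | zero => exact bot_le
  | succ N ih =>
    rw [eps_succ, elem_eps D ι i him]
    apply max_le
    · split <;> simp
    · calc (truncCrys D ι N).eps i (truncEmbed x N) + ((cfun D ι x i N : ℤ) : WithBot ℤ)
          ≤ 0 + ((0 : ℤ) : WithBot ℤ) := by
            apply add_le_add ih
            exact_mod_cast cfun_nonpos D ι x i him N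
        _ = 0 := by simp

lemma phi_le (him : D.a i i ≤ 0) (N : ℕ) :
    (truncCrys D ι N).phi i (truncEmbed x N) ≤
      ((-∑ k ∈ Finset.range N, cfun D ι x i k : ℤ) : WithBot ℤ) := by
  induction N with
  | zero => exact bot_le
  | succ N ih =>
    rw [phi_succ, elem_phi D ι i him]
    apply max_le
    · split_ifs with h
      · rw [← WithBot.coe_add, WithBot.coe_le_coe, Finset.sum_range_succ]
        have h2 : (-(x N : ℤ) * D.a i i) = -cfun D ι x i N := by rw [cfun, ← h]; ring
        omega
      · simp
    · refine le_trans ih ?_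
      rw [WithBot.coe_le_coe, Finset.sum_range_succ]
      have := cfun_nonpos D ι x i him N
      omega

lemma eps_ge (him : D.a i i ≤ 0) (k N : ℕ) (hk : k < N) (hik : ι k = i) :
    ((∑ l ∈ Finset.Ico (k + 1) N, cfun D ι x i l : ℤ) : WithBot ℤ) ≤
      (truncCrys D ι N).eps i (truncEmbed x N) := by
  induction N with
  | zero => omega
  | succ N ih =>
    rw [eps_succ, elem_eps D ι i him]
    rcases Nat.lt_or_ge k N with hlt | hge
    · refine le_trans ?_ (le_max_right _ _)
      rw [Finset.sum_Ico_succ_top (by omega), WithBot.coe_add]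
      exact add_le_add (ih hlt) le_rfl
    · have hkN : k = N := by omega
      subst hkN
      refine le_trans ?_ (le_max_left _ _)
      simp [hik.symm]

lemma eps_lt (him : D.a i i ≤ 0) (N : ℕ) (t : ℤ)
    (h : ∀ k, k < N → ι k = i → (∑ l ∈ Finset.Ico (k + 1) N, cfun D ι x i l) < t) :
    (truncCrys D ι N).eps i (truncEmbed x N) < ((t : ℤ) : WithBot ℤ) := by
  induction N generalizing t with
  | zero => exact WithBot.bot_lt_coe t
  | succ N ih =>
    rw [eps_succ, elem_eps D ι i him]
    apply max_lt
    · split_ifs with hcase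
      · have := h N (by omega) hcase.symm
        simp only [Finset.Ico_self, Finset.sum_empty] at this
        exact_mod_cast this
      · exact WithBot.bot_lt_coe t
    · have ih' := ih (t - cfun D ι x i N) (fun k hk hik => by
        have := h k (by omega) hik
        rw [Finset.sum_Ico_succ_top (by omega : k + 1 ≤ N)] at this
        omega)
      calc (truncCrys D ι N).eps i (truncEmbed x N) + ((cfun D ι x i N : ℤ) : WithBot ℤ)
          < ((t - cfun D ι x i N : ℤ) : WithBot ℤ) + ((cfun D ι x i N : ℤ) : WithBot ℤ) := by
            exact WithBot.add_lt_add_right (by simp) ih'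
        _ = ((t : ℤ) : WithBot ℤ) := by rw [← WithBot.coe_add]; ring_nf

lemma truncEmbed_congr (x y : ℕ → ℕ) (N : ℕ) (h : ∀ k, k < N → x k = y k) :
    truncEmbed x N = truncEmbed y N := by
  induction N with
  | zero => rfl
  | succ N ih =>
    show (x N, truncEmbed x N) = (y N, truncEmbed y N)
    rw [h N (by omega), ih (fun k hk => h k (by omega))]

lemma elem_f (N n : ℕ) :
    (elemCrys D (ι N)).f i n = if i = ι N then some (n + 1) else none := rfl

lemma finsum_Ioi_eq (N₀ : ℕ) (hx : ∀ k, N₀ ≤ k → x k = 0) (k M : ℕ) (hM : N₀ ≤ M) :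
    (∑ᶠ l ∈ Set.Ioi k, D.a i (ι l) * (x l : ℤ)) =
      ∑ l ∈ Finset.Ico (k + 1) M, cfun D ι x i l := by
  refine finsum_mem_eq_sum_of_inter_support_eq _ ?_
  ext l
  simp only [Set.mem_inter_iff, Set.mem_Ioi, Function.mem_support, Finset.coe_sort_coe,
    Finset.mem_coe, Finset.mem_Ico]
  constructor
  · rintro ⟨h1, h2⟩
    refine ⟨⟨by omega, ?_⟩, h2⟩
    by_contra hl
    exact h2 (by simp [hx l (by omega)])
  · rintro ⟨⟨h1, _⟩, h2⟩
    exact ⟨by omega, h2⟩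

lemma finsum_all_eq (N₀ : ℕ) (hx : ∀ k, N₀ ≤ k → x k = 0) (M : ℕ) (hM : N₀ ≤ M) :
    (∑ᶠ k, D.a i (ι k) * (x k : ℤ)) = ∑ k ∈ Finset.range M, cfun D ι x i k := by
  refine finsum_eq_sum_of_support_subset _ ?_
  intro l hl
  simp only [Function.mem_support] at hl
  simp only [Finset.coe_range, Set.mem_Iio]
  by_contra h
  exact hl (by simp [hx l (by omega)])

end Aux

/-- in the semi-infinite crystal `B(𝐢)`, for an imaginary index `i`
one has `ε_i(b) = 0` and `φ_i(b) = wt_i(b) = ⟨h_i, -Σ_k x_k α_{i_k}⟩`, and `f̃_i`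
increases `x_{n_f}` by one, where `n_f` is the smallest `k` with `i_k = i` and
`Σ_{l>k} ⟨h_i, α_{i_l}⟩ x_l = 0`. -/
theorem semiInfinite_imaginary_f {I P : Type*} [AddCommGroup P] [DecidableEq I]
    (D : BorcherdsCartanDatum I P)
    (ι : ℕ → I) (hι : ∀ (i : I) (N : ℕ), ∃ k, N ≤ k ∧ ι k = i)
    (x : ℕ → ℕ) (N₀ : ℕ) (hx : ∀ k, N₀ ≤ k → x k = 0)
    (i : I) (him : D.a i i ≤ 0)
    (nf : ℕ) (hnf₁ : ι nf = i)
    (hnf₂ : (∑ᶠ l ∈ Set.Ioi nf, D.a i (ι l) * (x l : ℤ)) = 0)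
    (hnf₃ : ∀ k, k < nf →
      ¬(ι k = i ∧ (∑ᶠ l ∈ Set.Ioi k, D.a i (ι l) * (x l : ℤ)) = 0)) :
    ∃ N₁, ∀ N, N₁ ≤ N →
      (truncCrys D ι N).eps i (truncEmbed x N) = (0 : WithBot ℤ) ∧
      (truncCrys D ι N).phi i (truncEmbed x N) =
        ((-(∑ᶠ k, D.a i (ι k) * (x k : ℤ)) : ℤ) : WithBot ℤ) ∧
      (truncCrys D ι N).f i (truncEmbed x N) =
        some (truncEmbed (Function.update x nf (x nf + 1)) N) := by
  classical
  set M := max N₀ (nf + 1) with hM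
  have hMN₀ : N₀ ≤ M := le_max_left _ _
  have hMnf : nf + 1 ≤ M := le_max_right _ _
  have hc0 : ∀ k, N₀ ≤ k → cfun D ι x i k = 0 := by
    intro k hk; simp [cfun, hx k hk]
  have htail : ∑ l ∈ Finset.Ico (nf + 1) M, cfun D ι x i l = 0 := by
    rw [← finsum_Ioi_eq D ι x i N₀ hx nf M hMN₀]; exact hnf₂
  have hzero : ∀ l, nf < l → cfun D ι x i l = 0 := by
    intro l hl
    rcases Nat.lt_or_ge l M with h | h
    · exact (Finset.sum_eq_zero_iff_of_nonpos
        (fun j _ => cfun_nonpos D ι x i him j)).1 htail l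
        (Finset.mem_Ico.2 ⟨by omega, h⟩)
    · exact hc0 l (by omega)
  obtain ⟨k₀, hk₀M, hk₀i⟩ := hι i M
  -- the partial sums are eventually constant
  have hS : ∀ N, M ≤ N → ∑ k ∈ Finset.range N, cfun D ι x i k
      = ∑ k ∈ Finset.range M, cfun D ι x i k := by
    intro N hN
    refine (Finset.sum_subset (Finset.range_subset_range.2 hN) ?_).symm
    intro l _ hl
    simp only [Finset.mem_range, not_lt] at hl
    exact hc0 l (by omega)
  -- ε_i vanishes from k₀ + 1 on
  have heps : ∀ N, k₀ + 1 ≤ N → (truncCrys D ι N).eps i (truncEmbed x N) = 0 := by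
    intro N hN
    refine le_antisymm (eps_nonpos D ι x i him N) ?_
    have h1 := eps_ge D ι x i him k₀ N (by omega) hk₀i
    have h2 : ∑ l ∈ Finset.Ico (k₀ + 1) N, cfun D ι x i l = 0 :=
      Finset.sum_eq_zero (fun l hl => hzero l
        (by have := (Finset.mem_Ico.1 hl).1; omega))
    rw [h2] at h1
    exact_mod_cast h1
  -- φ_i is eventually the total weight
  have hphi : ∀ N, k₀ + 1 ≤ N → (truncCrys D ι N).phi i (truncEmbed x N)
      = ((-(∑ k ∈ Finset.range M, cfun D ι x i k) : ℤ) : WithBot ℤ) := by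
    intro N hN
    induction N, hN using Nat.le_induction with
    | base =>
      rw [phi_succ, elem_phi D ι i him, if_pos hk₀i.symm]
      have hx0 : (-(x k₀ : ℤ) * D.a i i : ℤ) = 0 := by
        have h2 := hzero k₀ (by omega)
        rw [cfun, hk₀i] at h2
        linear_combination -h2
      rw [hx0, WithBot.coe_zero, zero_add,
        max_eq_left (phi_le D ι x i him k₀), hS k₀ (by omega)]
    | succ N hN ih =>
      rw [phi_succ, elem_phi D ι i him, ih]
      split_ifs with h
      · have h1 : (-(x N : ℤ) * D.a i i : ℤ) = 0 := by
          have h2 := hzero N (by omega)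
          rw [cfun, ← h] at h2
          linear_combination -h2
        rw [h1, WithBot.coe_zero, zero_add, hS N (by omega), max_self]
      · simp
  -- the action of f̃_i
  have hf : ∀ N, nf + 1 ≤ N → (truncCrys D ι N).f i (truncEmbed x N)
      = some (truncEmbed (Function.update x nf (x nf + 1)) N) := by
    intro N hN
    induction N, hN using Nat.le_induction with
    | base =>
      rw [f_succ, elem_phi D ι i him, if_pos hnf₁.symm]
      have hcond : (truncCrys D ι nf).eps i (truncEmbed x nf)
          < ((-(x nf : ℤ) * D.a i i : ℤ) : WithBot ℤ) := by
        refine eps_lt D ι x i him nf _ ?_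
        intro k hk hik
        have h3 := hnf₃ k hk
        push_neg at h3
        have h4 : (∑ᶠ l ∈ Set.Ioi k, D.a i (ι l) * (x l : ℤ)) ≠ 0 := h3 hik
        rw [finsum_Ioi_eq D ι x i N₀ hx k M hMN₀] at h4
        have h5 : ∑ l ∈ Finset.Ico (k + 1) M, cfun D ι x i l
            = ∑ l ∈ Finset.Ico (k + 1) nf, cfun D ι x i l
              + (cfun D ι x i nf + ∑ l ∈ Finset.Ico (nf + 1) M, cfun D ι x i l) := by
          rw [← Finset.sum_eq_sum_Ico_succ_bot (by omega : nf < M),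
            Finset.sum_Ico_consecutive _ (by omega : k + 1 ≤ nf) (by omega : nf ≤ M)]
        rw [htail, add_zero] at h5
        have h6 : ∑ l ∈ Finset.Ico (k + 1) M, cfun D ι x i l ≤ 0 :=
          Finset.sum_nonpos (fun j _ => cfun_nonpos D ι x i him j)
        have h7 : ∑ l ∈ Finset.Ico (k + 1) M, cfun D ι x i l < 0 :=
          lt_of_le_of_ne h6 h4
        have e1 : cfun D ι x i nf = D.a i i * (x nf : ℤ) := by rw [cfun, hnf₁]
        have e2 : (-(x nf : ℤ) * D.a i i : ℤ) = -(D.a i i * (x nf : ℤ)) := by ring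
        rw [e2]
        linarith [h5, h7, e1]
      rw [if_pos hcond, elem_f D ι i, if_pos hnf₁.symm, Option.map_some]
      have hemb : truncEmbed (Function.update x nf (x nf + 1)) (nf + 1)
          = ((x nf + 1, truncEmbed x nf) : ℕ × TruncCarrier nf) := by
        show ((Function.update x nf (x nf + 1) nf,
          truncEmbed (Function.update x nf (x nf + 1)) nf) : ℕ × TruncCarrier nf) = _
        rw [Function.update_self,
          truncEmbed_congr (Function.update x nf (x nf + 1)) x nf
            (fun k hk => Function.update_of_ne (by omega) _ _)]
      rw [hemb]
      rfl
    | succ N hN ih =>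
      rw [f_succ]
      have hcondF : ¬ ((truncCrys D ι N).eps i (truncEmbed x N)
          < (elemCrys D (ι N)).phi i (x N)) := by
        rw [elem_phi D ι i him]
        split_ifs with h
        · have h1 : (-(x N : ℤ) * D.a i i : ℤ) = 0 := by
            have h2 := hzero N (by omega)
            rw [cfun, ← h] at h2
            linear_combination -h2
          rw [h1]
          have h3 := eps_ge D ι x i him nf N (by omega) hnf₁
          have h4 : ∑ l ∈ Finset.Ico (nf + 1) N, cfun D ι x i l = 0 :=
            Finset.sum_eq_zero (fun l hl => hzero l
              (by have := (Finset.mem_Ico.1 hl).1; omega))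
          rw [h4] at h3
          exact not_lt.2 h3
        · exact not_lt.2 bot_le
      rw [if_neg hcondF, ih, Option.map_some]
      show _ = some ((Function.update x nf (x nf + 1) N,
        truncEmbed (Function.update x nf (x nf + 1)) N) : ℕ × TruncCarrier N)
      rw [Function.update_of_ne (by omega : N ≠ nf)]
  refine ⟨k₀ + 1, fun N hN => ⟨heps N hN, ?_, hf N (by omega)⟩⟩
  rw [finsum_all_eq D ι x i N₀ hx M hMN₀]
  exact hphi N hN
end
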